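/- Let p be a prime with p ≡ 1 (mod 3). Then there exist integers A and B such that p = N_3(a + bX + 5(AX + B)), where (a,b) = (1,0) if p ≡ 1 (mod 15), (a,b) = (2,0) if p ≡ 4 (mod 15), (a,b) = (3,1) if p ≡ 7 (mod 15), and (a,b) = (4,3) if p ≡ 13 (mod 15). -/
import Mathlib

open Polynomial

/-- `Nnorm d F` is the product of `F` over the primitive `d`-th roots of unity in `ℂ`. -/
noncomputable def Nnorm (d : ℕ) (F : Polynomial ℤ) : ℂ :=
  ∏ j ∈ (Finset.range d).filter (fun j => Nat.gcd j d = 1),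
    Polynomial.aeval (Complex.exp (2 * ↑Real.pi * Complex.I * (j : ℂ) / (d : ℂ))) F


lemma sq_neg_three (p : ℕ) (hp : p.Prime) (h3 : p % 3 = 1) :
    ∃ s : ZMod p, s ^ 2 = -3 := by
  haveI : Fact p.Prime := ⟨hp⟩
  obtain ⟨g, hg⟩ := IsCyclic.exists_ofOrder_eq_natCard (α := (ZMod p)ˣ)
  have hcard : Nat.card (ZMod p)ˣ = p - 1 := by
    rw [Nat.card_eq_fintype_card, ZMod.card_units p]
  rw [hcard] at hg
  have hple : 4 ≤ p := by
    have := hp.two_le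
    omega
  set m := (p - 1) / 3 with hm
  have h3d : p - 1 = 3 * m := by omega
  have hmpos : 0 < m := by omega
  set w := g ^ m with hw
  have how : orderOf w = 3 := by
    rw [hw, orderOf_pow, hg, h3d, Nat.gcd_eq_right ⟨3, mul_comm 3 m⟩,
      Nat.mul_div_cancel _ hmpos]
  set z : ZMod p := ((w : (ZMod p)ˣ) : ZMod p) with hz
  have hz3 : z ^ 3 = 1 := by
    have : w ^ 3 = 1 := by rw [← how]; exact pow_orderOf_eq_one w
    rw [hz, ← Units.val_pow_eq_pow_val, this, Units.val_one]
  have hzne : z ≠ 1 := by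
    intro h
    have : w = 1 := Units.ext (by simpa [hz] using h)
    rw [this, orderOf_one] at how
    omega
  have hsum : z ^ 2 + z + 1 = 0 := by
    have hfac : (z - 1) * (z ^ 2 + z + 1) = 0 := by linear_combination hz3
    rcases mul_eq_zero.mp hfac with h | h
    · exact absurd (sub_eq_zero.mp h) hzne
    · exact h
  exact ⟨2 * z + 1, by linear_combination 4 * hsum⟩



set_option maxHeartbeats 1600000 in
lemma exists_a_sq_add_three_b_sq (p : ℕ) (hp : p.Prime) (h3 : p % 3 = 1) :
    ∃ a b : ℤ, a ^ 2 + 3 * b ^ 2 = p := by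
  haveI : Fact p.Prime := ⟨hp⟩
  obtain ⟨s, hs⟩ := sq_neg_three p hp h3
  set m := Nat.sqrt p with hmdef
  have hmlt : m * m < p := by
    have hle : m * m ≤ p := by have := Nat.sqrt_le' p; nlinarith
    rcases lt_or_eq_of_le hle with h | h
    · exact h
    · exfalso
      rcases (Nat.Prime.eq_one_or_self_of_dvd hp m ⟨m, h.symm⟩) with h1 | h1
      · rw [h1] at h; simpa [← h] using hp.one_lt
      · rw [h1] at h; nlinarith [hp.one_lt]
  have hplt : p < (m + 1) * (m + 1) := by have := Nat.lt_succ_sqrt' p; nlinarith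
  -- pigeonhole
  have hcard : (Fintype.card (ZMod p)) <
      ((Finset.range (m + 1)) ×ˢ (Finset.range (m + 1))).card := by
    rw [Finset.card_product, Finset.card_range, ZMod.card]
    exact hplt
  obtain ⟨c, hcmem, d, hdmem, hne, heq⟩ :=
    Finset.exists_ne_map_eq_of_card_lt_of_maps_to
      (t := (Finset.univ : Finset (ZMod p)))
      (f := fun uv : ℕ × ℕ => (uv.1 : ZMod p) - s * (uv.2 : ℕ))
      (by exact hcard) (fun a _ => Finset.mem_univ _)
  simp only [Finset.mem_product, Finset.mem_range] at hcmem hdmem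
  obtain ⟨a, ha⟩ : ∃ a : ℤ, a = (c.1 : ℤ) - d.1 := ⟨_, rfl⟩
  obtain ⟨b, hb⟩ : ∃ b : ℤ, b = (c.2 : ℤ) - d.2 := ⟨_, rfl⟩
  have hab : (a : ZMod p) = s * (b : ZMod p) := by
    have : ((c.1 : ℕ) : ZMod p) - s * (c.2 : ℕ) = ((d.1 : ℕ) : ZMod p) - s * (d.2 : ℕ) := heq
    push_cast [ha, hb]
    linear_combination this
  have hdvd : (p : ℤ) ∣ a ^ 2 + 3 * b ^ 2 := by
    have : ((a ^ 2 + 3 * b ^ 2 : ℤ) : ZMod p) = 0 := by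
      push_cast
      rw [hab]
      linear_combination ((b : ZMod p))^2 * hs
    exact (ZMod.intCast_zmod_eq_zero_iff_dvd _ p).mp this
  obtain ⟨k, hk⟩ := hdvd
  have hbnd : ∀ (x y : ℕ), x < m + 1 → y < m + 1 → ((x : ℤ) - y) ^ 2 ≤ (m : ℤ) * m := by
    intro x y hx hy
    have h1 : (x : ℤ) ≤ m := by exact_mod_cast Nat.lt_succ_iff.mp hx
    have h2 : (y : ℤ) ≤ m := by exact_mod_cast Nat.lt_succ_iff.mp hy
    have h3 : (0 : ℤ) ≤ x := Int.natCast_nonneg _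
    have h4 : (0 : ℤ) ≤ y := Int.natCast_nonneg _
    nlinarith
  have hba : a ^ 2 ≤ (m : ℤ) * m := by rw [ha]; exact hbnd _ _ hcmem.1 hdmem.1
  have hbb : b ^ 2 ≤ (m : ℤ) * m := by rw [hb]; exact hbnd _ _ hcmem.2 hdmem.2
  have hpos : 0 < a ^ 2 + 3 * b ^ 2 := by
    rcases eq_or_ne a 0 with h0 | h0
    · rcases eq_or_ne b 0 with h1 | h1
      · exfalso
        apply hne
        have e1 : c.1 = d.1 := by
          have : (c.1 : ℤ) = d.1 := by rw [ha] at h0; linarith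
          exact_mod_cast this
        have e2 : c.2 = d.2 := by
          have : (c.2 : ℤ) = d.2 := by rw [hb] at h1; linarith
          exact_mod_cast this
        exact Prod.ext e1 e2
      · nlinarith [sq_nonneg a, sq_pos_of_ne_zero h1]
    · nlinarith [sq_nonneg b, sq_pos_of_ne_zero h0]
  have hppos : (0:ℤ) < p := Int.natCast_pos.mpr hp.pos
  have hkpos : 0 < k := by
    by_contra hle
    push_neg at hle
    have h0 : (p : ℤ) * k ≤ 0 := mul_nonpos_of_nonneg_of_nonpos hppos.le hle
    linarith [hpos, hk]
  have hklt : k < 4 := by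
    have hmp : (m : ℤ) * m < p := by exact_mod_cast hmlt
    have h1 : (p : ℤ) * k < p * 4 := by linarith [hba, hbb, hk]
    exact lt_of_mul_lt_mul_left h1 hppos.le
  interval_cases k
  · exact ⟨a, b, by linarith [hk]⟩
  · -- a^2+3b^2 = 2p impossible mod 4
    exfalso
    have hodd : p % 2 = 1 := by
      rcases hp.eq_two_or_odd with h | h
      · omega
      · exact h
    have h4 : ((a : ZMod 4)) ^ 2 + 3 * ((b : ZMod 4)) ^ 2 = 2 * ((p : ℕ) : ZMod 4) := by
      have hcast := congrArg (Int.cast : ℤ → ZMod 4) hk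
      push_cast at hcast
      linear_combination hcast
    have hp4 : ((p : ℕ) : ZMod 4) = 1 ∨ ((p : ℕ) : ZMod 4) = 3 := by
      have hm4 : p % 4 = 1 ∨ p % 4 = 3 := by omega
      rcases hm4 with h | h
      · left
        rw [← ZMod.natCast_mod p 4, h]
        norm_num
      · right
        rw [← ZMod.natCast_mod p 4, h]
        norm_num
    have key : ∀ x y q : ZMod 4, (q = 1 ∨ q = 3) → x ^ 2 + 3 * y ^ 2 ≠ 2 * q := by decide
    exact key _ _ _ hp4 h4
  · -- a^2+3b^2 = 3p : then 3 ∣ a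
    have h3a : (3 : ℤ) ∣ a := by
      have hsq : (3 : ℤ) ∣ a ^ 2 := ⟨p - b ^ 2, by linarith [hk]⟩
      have hpr : Prime (3 : ℤ) := Int.prime_three
      exact hpr.dvd_of_dvd_pow hsq
    obtain ⟨e, he⟩ := h3a
    exact ⟨b, e, by nlinarith [hk]⟩

lemma Nnorm_three (a b A B : ℤ) :
    Nnorm 3 (Polynomial.C a + Polynomial.C b * X
      + Polynomial.C 5 * (Polynomial.C A * X + Polynomial.C B)) =
    (((a + 5 * B) ^ 2 - (a + 5 * B) * (b + 5 * A) + (b + 5 * A) ^ 2 : ℤ) : ℂ) := by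
  have hfilt : (Finset.range 3).filter (fun j => Nat.gcd j 3 = 1) = {1, 2} := by decide
  rw [Nnorm, hfilt]
  rw [Finset.prod_insert (by decide), Finset.prod_singleton]
  set ζ : ℂ := Complex.exp (2 * ↑Real.pi * Complex.I / 3) with hζdef
  have hprim : IsPrimitiveRoot ζ 3 := Complex.isPrimitiveRoot_exp 3 (by norm_num)
  have h1 : ζ ^ 3 = 1 := hprim.pow_eq_one
  have hne : ζ ≠ 1 := hprim.ne_one (by norm_num)
  have hsum : ζ ^ 2 + ζ + 1 = 0 := by
    have hfac : (ζ - 1) * (ζ ^ 2 + ζ + 1) = 0 := by linear_combination h1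
    rcases mul_eq_zero.mp hfac with h | h
    · exact absurd (sub_eq_zero.mp h) hne
    · exact h
  have e1 : 2 * (↑Real.pi : ℂ) * Complex.I * ((1 : ℕ) : ℂ) / ((3 : ℕ) : ℂ) =
      2 * ↑Real.pi * Complex.I / 3 := by push_cast; ring
  have e2 : 2 * (↑Real.pi : ℂ) * Complex.I * ((2 : ℕ) : ℂ) / ((3 : ℕ) : ℂ) =
      2 * (2 * ↑Real.pi * Complex.I / 3) := by push_cast; ring
  have he2 : Complex.exp (2 * (↑Real.pi : ℂ) * Complex.I * ((2 : ℕ) : ℂ) / ((3 : ℕ) : ℂ))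
      = ζ ^ 2 := by
    rw [e2, hζdef, ← Complex.exp_nat_mul]
    norm_num
  have he1 : Complex.exp (2 * (↑Real.pi : ℂ) * Complex.I * ((1 : ℕ) : ℂ) / ((3 : ℕ) : ℂ))
      = ζ := by rw [e1, hζdef]
  rw [he1, he2]
  simp only [map_add, map_mul, aeval_X, aeval_C, map_intCast, map_ofNat, eq_intCast]
  push_cast
  linear_combination (((a : ℂ) + 5 * B) * ((b : ℂ) + 5 * A)) * hsum + ((b : ℂ) + 5 * A) ^ 2 * h1


lemma orbit5 (u v a b : ZMod 5) (h : u^2 - u*v + v^2 = a^2 - a*b + b^2) :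
    (u = a ∧ v = b) ∨ (-v = a ∧ u - v = b) ∨ (v - u = a ∧ -u = b) ∨
    (-u = a ∧ -v = b) ∨ (v = a ∧ v - u = b) ∨ (u - v = a ∧ u = b) ∨
    (u - v = a ∧ -v = b) ∨ (v = a ∧ u = b) ∨ (-u = a ∧ v - u = b) ∨
    (v - u = a ∧ v = b) ∨ (-v = a ∧ -u = b) ∨ (u = a ∧ u - v = b) := by
  revert h; revert u v a b; decide

lemma step5 (P a b U V : ℤ) (h : U ^ 2 - U * V + V ^ 2 = P)
    (hU : ((U : ZMod 5)) = (a : ZMod 5)) (hV : ((V : ZMod 5)) = (b : ZMod 5)) :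
    ∃ A B : ℤ, (a + 5 * B) ^ 2 - (a + 5 * B) * (b + 5 * A) + (b + 5 * A) ^ 2 = P := by
  have h5U : (5 : ℤ) ∣ U - a := by
    have : ((U - a : ℤ) : ZMod 5) = 0 := by push_cast; rw [hU]; ring
    exact_mod_cast (ZMod.intCast_zmod_eq_zero_iff_dvd _ 5).mp this
  have h5V : (5 : ℤ) ∣ V - b := by
    have : ((V - b : ℤ) : ZMod 5) = 0 := by push_cast; rw [hV]; ring
    exact_mod_cast (ZMod.intCast_zmod_eq_zero_iff_dvd _ 5).mp this
  obtain ⟨B, hB⟩ := h5U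
  obtain ⟨A, hA⟩ := h5V
  refine ⟨A, B, ?_⟩
  have eU : a + 5 * B = U := by linarith
  have eV : b + 5 * A = V := by linarith
  rw [eU, eV]; exact h

lemma adjust5 (P a b x y : ℤ) (h : x ^ 2 - x * y + y ^ 2 = P)
    (hc : ((a : ZMod 5)) ^ 2 - (a : ZMod 5) * (b : ZMod 5) + ((b : ZMod 5)) ^ 2
      = ((P : ℤ) : ZMod 5)) :
    ∃ A B : ℤ, (a + 5 * B) ^ 2 - (a + 5 * B) * (b + 5 * A) + (b + 5 * A) ^ 2 = P := by
  have hxy : ((x : ZMod 5)) ^ 2 - (x : ZMod 5) * (y : ZMod 5) + ((y : ZMod 5)) ^ 2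
      = (a : ZMod 5) ^ 2 - (a : ZMod 5) * (b : ZMod 5) + ((b : ZMod 5)) ^ 2 := by
    rw [hc]
    have := congrArg (Int.cast : ℤ → ZMod 5) h
    push_cast at this ⊢
    linear_combination this
  rcases orbit5 _ _ _ _ hxy with ⟨h1,h2⟩|⟨h1,h2⟩|⟨h1,h2⟩|⟨h1,h2⟩|⟨h1,h2⟩|⟨h1,h2⟩|⟨h1,h2⟩|⟨h1,h2⟩|⟨h1,h2⟩|⟨h1,h2⟩|⟨h1,h2⟩|⟨h1,h2⟩
  · exact step5 P a b x y (by linear_combination h) (by push_cast; linear_combination h1) (by push_cast; linear_combination h2)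
  · exact step5 P a b (-y) (x-y) (by linear_combination h) (by push_cast; linear_combination h1) (by push_cast; linear_combination h2)
  · exact step5 P a b (y-x) (-x) (by linear_combination h) (by push_cast; linear_combination h1) (by push_cast; linear_combination h2)
  · exact step5 P a b (-x) (-y) (by linear_combination h) (by push_cast; linear_combination h1) (by push_cast; linear_combination h2)
  · exact step5 P a b y (y-x) (by linear_combination h) (by push_cast; linear_combination h1) (by push_cast; linear_combination h2)
  · exact step5 P a b (x-y) x (by linear_combination h) (by push_cast; linear_combination h1) (by push_cast; linear_combination h2)
  · exact step5 P a b (x-y) (-y) (by linear_combination h) (by push_cast; linear_combination h1) (by push_cast; linear_combination h2)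
  · exact step5 P a b y x (by linear_combination h) (by push_cast; linear_combination h1) (by push_cast; linear_combination h2)
  · exact step5 P a b (-x) (y-x) (by linear_combination h) (by push_cast; linear_combination h1) (by push_cast; linear_combination h2)
  · exact step5 P a b (y-x) y (by linear_combination h) (by push_cast; linear_combination h1) (by push_cast; linear_combination h2)
  · exact step5 P a b (-y) (-x) (by linear_combination h) (by push_cast; linear_combination h1) (by push_cast; linear_combination h2)
  · exact step5 P a b x (x-y) (by linear_combination h) (by push_cast; linear_combination h1) (by push_cast; linear_combination h2)


theorem stmt13 (p : ℕ) (hp : Nat.Prime p) (h3 : p % 3 = 1) :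
    (p % 15 = 1 → ∃ A B : ℤ,
      Nnorm 3 (Polynomial.C 1 + Polynomial.C 0 * X
        + Polynomial.C 5 * (Polynomial.C A * X + Polynomial.C B)) = (p : ℂ)) ∧
    (p % 15 = 4 → ∃ A B : ℤ,
      Nnorm 3 (Polynomial.C 2 + Polynomial.C 0 * X
        + Polynomial.C 5 * (Polynomial.C A * X + Polynomial.C B)) = (p : ℂ)) ∧
    (p % 15 = 7 → ∃ A B : ℤ,
      Nnorm 3 (Polynomial.C 3 + Polynomial.C 1 * X
        + Polynomial.C 5 * (Polynomial.C A * X + Polynomial.C B)) = (p : ℂ)) ∧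
    (p % 15 = 13 → ∃ A B : ℤ,
      Nnorm 3 (Polynomial.C 4 + Polynomial.C 3 * X
        + Polynomial.C 5 * (Polynomial.C A * X + Polynomial.C B)) = (p : ℂ)) := by
  obtain ⟨u, v, huv⟩ := exists_a_sq_add_three_b_sq p hp h3
  have hrep : (u + v) ^ 2 - (u + v) * (2 * v) + (2 * v) ^ 2 = (p : ℤ) := by
    linear_combination huv
  have key : ∀ a b : ℤ,
      ((a : ZMod 5)) ^ 2 - (a : ZMod 5) * (b : ZMod 5) + ((b : ZMod 5)) ^ 2
        = (((p : ℤ) : ℤ) : ZMod 5) →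
      ∃ A B : ℤ, Nnorm 3 (Polynomial.C a + Polynomial.C b * X
        + Polynomial.C 5 * (Polynomial.C A * X + Polynomial.C B)) = (p : ℂ) := by
    intro a b hc
    obtain ⟨A, B, hAB⟩ := adjust5 (p : ℤ) a b (u + v) (2 * v) hrep (by exact_mod_cast hc)
    refine ⟨A, B, ?_⟩
    rw [Nnorm_three, hAB]
    norm_cast
  refine ⟨?_, ?_, ?_, ?_⟩ <;> intro h15
  · refine key 1 0 ?_
    have hp5 : ((p : ℕ) : ZMod 5) = 1 := by
      rw [← ZMod.natCast_mod p 5, (by omega : p % 5 = 1)]; norm_num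
    push_cast
    rw [hp5]; decide
  · refine key 2 0 ?_
    have hp5 : ((p : ℕ) : ZMod 5) = 4 := by
      rw [← ZMod.natCast_mod p 5, (by omega : p % 5 = 4)]; norm_num
    push_cast
    rw [hp5]; decide
  · refine key 3 1 ?_
    have hp5 : ((p : ℕ) : ZMod 5) = 2 := by
      rw [← ZMod.natCast_mod p 5, (by omega : p % 5 = 2)]; norm_num
    push_cast
    rw [hp5]; decide
  · refine key 4 3 ?_
    have hp5 : ((p : ℕ) : ZMod 5) = 3 := by
      rw [← ZMod.natCast_mod p 5, (by omega : p % 5 = 3)]; norm_num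
    push_cast
    rw [hp5]; decide
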